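/- arXiv:2002.12309 — 3 statements merged into one kernel-verified Lean document; each statement's English description precedes it below -/
import Mathlib

section
/- For every real t ≠ 0, det(B − tI) = t^{2d} · det(B' − tI + X/t²), where B is the NB-matrix of G, B' is its block indexed by directed edges not incident to a node c of degree d, and X = DFE. -/
open Matrix

/-- The non-backtracking matrix of a simple graph `G`: rows and columns are indexed by
darts (directed edges); entry `(k→l, i→j)` is `δ_{jk} (1 - δ_{il})`. -/
def nbMatrix {V : Type*} [DecidableEq V] (G : SimpleGraph V) :
    Matrix G.Dart G.Dart ℝ := fun r c =>
  (if c.toProd.2 = r.toProd.1 then (1 : ℝ) else 0) *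
  (if c.toProd.1 = r.toProd.2 then 0 else 1)

/-- Darts (directed edges) not incident to the node `c`. -/
abbrev NonIncDart {V : Type*} (G : SimpleGraph V) (c : V) :=
  {e : G.Dart // e.toProd.1 ≠ c ∧ e.toProd.2 ≠ c}

/-- Darts (directed edges) incident to the node `c`. -/
abbrev IncDart {V : Type*} (G : SimpleGraph V) (c : V) :=
  {e : G.Dart // e.toProd.1 = c ∨ e.toProd.2 = c}

/-- The block `B'` of the NB-matrix: rows and columns indexed by darts not incident to `c`. -/
def blockB' {V : Type*} [DecidableEq V] (G : SimpleGraph V) (c : V) :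
    Matrix (NonIncDart G c) (NonIncDart G c) ℝ := fun r s => nbMatrix G r.val s.val

/-- The block `D`: rows indexed by darts not incident to `c`, columns by darts incident to `c`. -/
def blockD {V : Type*} [DecidableEq V] (G : SimpleGraph V) (c : V) :
    Matrix (NonIncDart G c) (IncDart G c) ℝ := fun r s => nbMatrix G r.val s.val

/-- The block `E`: rows indexed by darts incident to `c`, columns by darts not incident to `c`. -/
def blockE {V : Type*} [DecidableEq V] (G : SimpleGraph V) (c : V) :
    Matrix (IncDart G c) (NonIncDart G c) ℝ := fun r s => nbMatrix G r.val s.val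

/-- The block `F`: rows and columns indexed by darts incident to `c`. -/
def blockF {V : Type*} [DecidableEq V] (G : SimpleGraph V) (c : V) :
    Matrix (IncDart G c) (IncDart G c) ℝ := fun r s => nbMatrix G r.val s.val

/-- The matrix `X = D F E`, indexed by darts not incident to `c`. -/
def blockX {V : Type*} [Fintype V] [DecidableEq V] (G : SimpleGraph V) [DecidableRel G.Adj]
    (c : V) : Matrix (NonIncDart G c) (NonIncDart G c) ℝ :=
  blockD G c * blockF G c * blockE G c

/-!
Order the darts so that those not incident to `c` come first; then `B - t` is the block matrix
`[[B' - t, D], [E, F - t]]`. The entry of `B` in row `k→l`, column `i→j` is nonzero exactly when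
`i→j` can be continued by `k→l`. A nonzero entry of `F` continues a dart into `c` by a dart out of
`c`, so `F * F = 0` (it would need a loop at `c`); likewise a dart incident to `c` continued by one
avoiding `c` must leave `c`, and then it cannot continue a dart avoiding `c`, so `D * E = 0`.
Hence `F - t` is invertible with inverse `-t⁻¹ - t⁻² F` and determinant `(-t)^(2d)`, and the Schur
complement `B' - t - D (F - t)⁻¹ E` equals `B' - t + t⁻² D F E`.
-/

section SquareZeroBlock

variable {n : Type*} [Fintype n] [DecidableEq n]

theorem Matrix.det_scalar_sub_of_isNilpotent {R : Type*} [CommRing R] [IsDomain R]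
    {N : Matrix n n R} (hN : IsNilpotent N) (t : R) :
    (scalar n t - N).det = t ^ Fintype.card n := by
  have hcharpoly : N.charpoly = Polynomial.X ^ Fintype.card n :=
    sub_eq_zero.mp (isNilpotent_charpoly_sub_pow_of_isNilpotent hN).eq_zero
  rw [← eval_charpoly, hcharpoly, Polynomial.eval_pow, Polynomial.eval_X]

variable {K : Type*} [Field K] {m : Type*} [Fintype m] [DecidableEq m]

theorem Matrix.det_sub_smul_one_of_mul_self_eq_zero {F : Matrix n n K} (hF : F * F = 0) (t : K) :
    (F - t • 1).det = (-t) ^ Fintype.card n := by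
  have hnil : IsNilpotent F := ⟨2, by rw [pow_two, hF]⟩
  rw [show F - t • 1 = -(scalar n t - F) by simp [smul_one_eq_diagonal], det_neg,
    det_scalar_sub_of_isNilpotent hnil, ← mul_pow, neg_one_mul]

/- Since `F ^ 2 = 0`, the Neumann series of `(F - t)⁻¹ = -t⁻¹ (1 - F / t)⁻¹` stops after two
terms. -/
theorem Matrix.sub_smul_one_mul_eq_one_of_mul_self_eq_zero {F : Matrix n n K} (hF : F * F = 0)
    {t : K} (ht : t ≠ 0) :
    (F - t • 1) * (-t⁻¹ • 1 - (t ^ 2)⁻¹ • F) = 1 := by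
  simp only [Matrix.sub_mul, Matrix.mul_sub, Matrix.smul_mul, Matrix.mul_smul, Matrix.one_mul,
    Matrix.mul_one, hF, zero_sub]
  match_scalars
  · field_simp
    ring
  · field_simp

theorem Matrix.det_fromBlocks_sub_smul_one_of_mul_self_eq_zero (A : Matrix m m K)
    {B : Matrix m n K} {C : Matrix n m K} {F : Matrix n n K} (hF : F * F = 0) (hBC : B * C = 0)
    {t : K} (ht : t ≠ 0) :
    (fromBlocks A B C (F - t • 1)).det =
      (-t) ^ Fintype.card n * (A + (t ^ 2)⁻¹ • (B * F * C)).det := by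
  have hinv := sub_smul_one_mul_eq_one_of_mul_self_eq_zero hF ht
  let := invertibleOfRightInverse _ _ hinv
  rw [det_fromBlocks₂₂, det_sub_smul_one_of_mul_self_eq_zero hF, invOf_eq_right_inv hinv]
  congr 2
  simp only [Matrix.mul_sub, Matrix.sub_mul, Matrix.mul_smul, Matrix.smul_mul, Matrix.mul_one,
    hBC, smul_zero, zero_sub, sub_neg_eq_add]

end SquareZeroBlock

section NonBacktracking

variable {V : Type*} [DecidableEq V] {G : SimpleGraph V} {c : V}

theorem nbMatrix_apply_ne_zero {r s : G.Dart} (h : nbMatrix G r s ≠ 0) :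
    s.snd = r.fst ∧ s.fst ≠ r.snd := by
  unfold nbMatrix at h
  split_ifs at h <;> simp_all

theorem blockF_apply_ne_zero {r s : IncDart G c} (h : blockF G c r s ≠ 0) :
    s.val.snd = c ∧ r.val.fst = c := by
  obtain ⟨hsr, hsr'⟩ := nbMatrix_apply_ne_zero h
  have hs : s.val.snd = c := by
    by_contra hs
    have hr : r.val.snd = c := r.prop.resolve_left fun hr => hs (hsr.trans hr)
    exact hsr' ((s.prop.resolve_right hs).trans hr.symm)
  exact ⟨hs, hsr ▸ hs⟩

variable (G c) in
def nonIncDartSumIncDartEquiv : NonIncDart G c ⊕ IncDart G c ≃ G.Dart :=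
  ((Equiv.subtypeEquivRight fun _ => not_or.symm).sumCongr (Equiv.refl _)).trans
    ((Equiv.sumComm _ _).trans (Equiv.sumCompl _))

theorem submatrix_nbMatrix_nonIncDartSumIncDartEquiv :
    (nbMatrix G).submatrix (nonIncDartSumIncDartEquiv G c) (nonIncDartSumIncDartEquiv G c) =
      fromBlocks (blockB' G c) (blockD G c) (blockE G c) (blockF G c) := by
  ext (i | i) (j | j) <;> rfl

variable [Fintype V] [DecidableRel G.Adj]

theorem blockF_mul_self : blockF G c * blockF G c = 0 := by
  ext r s
  refine Finset.sum_eq_zero fun m _ => by_contra fun hprod => ?_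
  obtain ⟨hrm, hms⟩ := mul_ne_zero_iff.mp hprod
  exact m.val.adj.ne ((blockF_apply_ne_zero hms).2.trans (blockF_apply_ne_zero hrm).1.symm)

theorem blockD_mul_blockE : blockD G c * blockE G c = 0 := by
  ext r s
  refine Finset.sum_eq_zero fun m _ => by_contra fun hprod => ?_
  obtain ⟨hrm, hms⟩ := mul_ne_zero_iff.mp hprod
  have hm : m.val.fst = c :=
    m.prop.resolve_right ((nbMatrix_apply_ne_zero hrm).1 ▸ r.prop.1)
  exact s.prop.2 ((nbMatrix_apply_ne_zero hms).1.trans hm)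

open Finset in
theorem card_incDart : Fintype.card (IncDart G c) = 2 * G.degree c := by
  have hsnd : #{d : G.Dart | d.snd = c} = G.degree c := by
    rw [← G.dart_fst_fiber_card_eq_degree]
    exact card_bij' (fun d _ => d.symm) (fun d _ => d.symm) (by simp) (by simp) (by simp)
      (by simp)
  rw [Fintype.card_subtype, filter_or, card_union_of_disjoint, hsnd,
    G.dart_fst_fiber_card_eq_degree, two_mul]
  exact disjoint_filter.mpr fun d _ hd₁ hd₂ => d.adj.ne (hd₁.trans hd₂.symm)

end NonBacktracking

theorem det_nbMatrix_sub_smul_one {V : Type*} [Fintype V] [DecidableEq V]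
    (G : SimpleGraph V) [DecidableRel G.Adj] (c : V) (t : ℝ) (ht : t ≠ 0) :
    (nbMatrix G - t • 1).det =
      t ^ (2 * G.degree c) * (blockB' G c - t • 1 + (t ^ 2)⁻¹ • blockX G c).det := by
  set e := nonIncDartSumIncDartEquiv G c
  have hblocks : (nbMatrix G - t • 1).submatrix e e =
      fromBlocks (blockB' G c - t • 1) (blockD G c) (blockE G c) (blockF G c - t • 1) := by
    change (nbMatrix G).submatrix e e - t • (1 : Matrix G.Dart G.Dart ℝ).submatrix e e = _
    rw [submatrix_one_equiv, submatrix_nbMatrix_nonIncDartSumIncDartEquiv, ← fromBlocks_one,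
      fromBlocks_smul]
    simp [sub_eq_add_neg, fromBlocks_neg, fromBlocks_add]
  rw [← det_submatrix_equiv_self e, hblocks,
    det_fromBlocks_sub_smul_one_of_mul_self_eq_zero _ blockF_mul_self blockD_mul_blockE ht,
    card_incDart, (even_two_mul _).neg_pow, blockX]
end

section
/- Suppose the node c of G, of degree d, lies in the 1-shell of G, i.e., there is no subgraph H of G containing c in which every vertex of H has degree at least 2 within H. Then det(B − tI) = t^{2d} · det(B' − tI) for all real t, where B is the NB-matrix of G and B' is the NB-matrix of G − c. In particular, removing a node of the 1-shell does not change the nonzero eigenvalues (with multiplicity) of the NB-matrix. -/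
open Matrix

instance {V : Type*} (G : SimpleGraph V) [DecidableRel G.Adj] (s : Set V) :
    DecidableRel (G.induce s).Adj := fun a b =>
  decidable_of_iff (G.Adj a b) Iff.rfl

/-!
Expand `det (B - t • 1)` over permutations of the darts. A permutation with a nonzero term takes
each dart it moves to a non-backtracking successor, so the orbit of a moved dart is a closed
non-backtracking walk, and its edges span a subgraph of minimum degree at least two. As `c` lies
in the 1-shell, such a permutation fixes the `2 * deg c` darts at `c`; these contribute the
diagonal factor `(-t) ^ (2 * deg c)`, and the darts avoiding `c` are exactly the darts of `G - c`.
The same expansion of the characteristic matrix gives `charpoly B = X ^ (2 * deg c) * charpoly B'`.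
-/

namespace Matrix

variable {ι R : Type*} [Fintype ι] [DecidableEq ι] [CommRing R]

theorem det_eq_prod_diag_mul_det_submatrix (N : Matrix ι ι R) (q : ι → Prop) [DecidablePred q]
    (h : ∀ σ : Equiv.Perm ι, (∃ i, ¬ q i ∧ σ i ≠ i) → ∃ i, N (σ i) i = 0) :
    N.det = (∏ i : {i // ¬ q i}, N i i) *
      (N.submatrix (Subtype.val : {i // q i} → ι) Subtype.val).det := by
  have hvanish : ∀ σ ∈ Finset.univ, σ ∉ Finset.univ.filter (fun σ : Equiv.Perm ι =>
      ∀ i, ¬ q i → σ i = i) → Equiv.Perm.sign σ • ∏ i, N (σ i) i = 0 := by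
    intro σ _ hσ
    simp only [Finset.mem_filter, Finset.mem_univ, true_and, not_forall] at hσ
    obtain ⟨j, hj, hσj⟩ := hσ
    obtain ⟨i, hi⟩ := h σ ⟨j, hj, hσj⟩
    rw [Finset.prod_eq_zero (f := fun i => N (σ i) i) (Finset.mem_univ i) hi, smul_zero]
  rw [det_apply, det_apply, Finset.mul_sum, ← Finset.sum_subset (Finset.subset_univ _) hvanish,
    Finset.sum_subtype (p := fun σ : Equiv.Perm ι => ∀ i, ¬ q i → σ i = i) _ (fun σ => by simp),
    ← (Equiv.Perm.subtypeEquivSubtypePerm q).sum_comp]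
  refine Finset.sum_congr rfl fun τ _ => ?_
  rw [Equiv.Perm.subtypeEquivSubtypePerm_apply_coe, Equiv.Perm.sign_ofSubtype, mul_smul_comm,
    ← Fintype.prod_subtype_mul_prod_subtype q, mul_comm]
  congr 2
  · exact Finset.prod_congr rfl fun i _ => by rw [Equiv.Perm.ofSubtype_apply_of_not_mem τ i.2]
  · exact Finset.prod_congr rfl fun i _ => by rw [Equiv.Perm.ofSubtype_apply_coe, submatrix_apply]

theorem det_reindex_sub_smul_one {κ : Type*} [Fintype κ] [DecidableEq κ] (e : ι ≃ κ)
    (A : Matrix ι ι R) (t : R) :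
    (reindex e e A - t • 1).det = (A - t • 1).det := by
  rw [← det_reindexAlgEquiv R R e, map_sub, map_smul, map_one, coe_reindexAlgEquiv]

section ZeroDiagonal

variable (M : Matrix ι ι R) (q : ι → Prop) [DecidablePred q] (hdiag : ∀ i, M i i = 0)
  (hcyc : ∀ σ : Equiv.Perm ι, (∃ i, ¬ q i ∧ σ i ≠ i) → ∃ i, σ i ≠ i ∧ M (σ i) i = 0)
include hdiag hcyc

theorem det_sub_smul_one_eq_pow_mul_det_submatrix (t : R) :
    (M - t • 1).det = (-t) ^ Fintype.card {i // ¬ q i} *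
      (M.submatrix (Subtype.val : {i // q i} → ι) Subtype.val - t • 1).det := by
  rw [det_eq_prod_diag_mul_det_submatrix _ q]
  · congr 1
    · simp [hdiag]
    · exact congrArg (fun A => (M.submatrix _ _ - t • A).det)
        (submatrix_one _ Subtype.val_injective)
  · intro σ hσ
    obtain ⟨i, hi, hM⟩ := hcyc σ hσ
    exact ⟨i, by rw [sub_apply, hM, smul_apply, one_apply_ne hi, smul_zero, sub_zero]⟩

theorem charpoly_eq_X_pow_mul_charpoly_submatrix :
    M.charpoly = Polynomial.X ^ Fintype.card {i // ¬ q i} *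
      (M.submatrix (Subtype.val : {i // q i} → ι) Subtype.val).charpoly := by
  rw [charpoly, charpoly, det_eq_prod_diag_mul_det_submatrix _ q]
  · congr 1
    · simp [hdiag]
    · exact congrArg (fun A => (A - (M.submatrix _ _).map Polynomial.C).det)
        (submatrix_diagonal _ _ Subtype.val_injective)
  · intro σ hσ
    obtain ⟨i, hi, hM⟩ := hcyc σ hσ
    exact ⟨i, by rw [charmatrix_apply_ne _ _ _ hi, hM, map_zero, neg_zero]⟩

end ZeroDiagonal

end Matrix

open Polynomial in
theorem Polynomial.rootMultiplicity_X_pow_mul {R : Type*} [CommRing R] [IsDomain R] {p : R[X]}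
    (hp : p ≠ 0) {a : R} (ha : a ≠ 0) (n : ℕ) :
    (X ^ n * p).rootMultiplicity a = p.rootMultiplicity a := by
  rw [rootMultiplicity_mul (mul_ne_zero (pow_ne_zero _ X_ne_zero) hp),
    rootMultiplicity_eq_zero (by simp [ha]), zero_add]

namespace SimpleGraph

variable {V : Type*} {G : SimpleGraph V}

def Subgraph.ofDarts (D : Set G.Dart) : G.Subgraph where
  verts := {v | ∃ d ∈ D, d.fst = v ∨ d.snd = v}
  Adj a b := ∃ d ∈ D, d.toProd = (a, b) ∨ d.toProd = (b, a)
  adj_sub := by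
    rintro a b ⟨d, -, h | h⟩ <;> obtain ⟨rfl, rfl⟩ := Prod.ext_iff.1 h
    exacts [d.adj, d.adj.symm]
  edge_vert := by
    rintro a b ⟨d, hd, h | h⟩
    · exact ⟨d, hd, .inl (congrArg Prod.fst h)⟩
    · exact ⟨d, hd, .inr (congrArg Prod.snd h)⟩
  symm := ⟨fun _ _ ⟨d, hd, h⟩ => ⟨d, hd, h.symm⟩⟩

theorem Subgraph.two_le_ncard_neighborSet_ofDarts [Finite V] {D : Set G.Dart}
    {f : G.Dart → G.Dart} (hmaps : Set.MapsTo f D D) (hsurj : Set.SurjOn f D D)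
    (hnb : ∀ d ∈ D, (f d).fst = d.snd ∧ (f d).snd ≠ d.fst) {v : V}
    (hv : v ∈ (ofDarts D).verts) : 2 ≤ ((ofDarts D).neighborSet v).ncard := by
  obtain ⟨d, hd, rfl⟩ : ∃ d ∈ D, d.snd = v := by
    obtain ⟨d, hd, rfl | rfl⟩ := hv
    · obtain ⟨e, he, rfl⟩ := hsurj hd
      exact ⟨e, he, (hnb e he).1.symm⟩
    · exact ⟨d, hd, rfl⟩
  have hback : d.fst ∈ (ofDarts D).neighborSet d.snd := ⟨d, hd, .inr rfl⟩
  have hforth : (f d).snd ∈ (ofDarts D).neighborSet d.snd :=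
    ⟨f d, hmaps hd, .inl (Prod.ext (hnb d hd).1 rfl)⟩
  exact (Set.one_lt_ncard_iff).2 ⟨_, _, hback, hforth, (hnb d hd).2.symm⟩

variable (G)

def induceDartEquiv (s : Set V) :
    {d : G.Dart // d.fst ∈ s ∧ d.snd ∈ s} ≃ (G.induce s).Dart where
  toFun d := ⟨(⟨d.1.fst, d.2.1⟩, ⟨d.1.snd, d.2.2⟩), d.1.adj⟩
  invFun e := ⟨⟨(e.fst, e.snd), e.adj⟩, e.fst.2, e.snd.2⟩
  left_inv _ := rfl
  right_inv _ := rfl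

theorem card_dart_fst_or_snd_eq_two_mul_degree [Fintype V] [DecidableEq V] [DecidableRel G.Adj]
    (c : V) :
    Fintype.card {d : G.Dart // d.fst = c ∨ d.snd = c} = 2 * G.degree c := by
  have hdisj : Disjoint (fun d : G.Dart => d.fst = c) (fun d => d.snd = c) :=
    Pi.disjoint_iff.2 fun d => Prop.disjoint_iff.2 fun ⟨h₁, h₂⟩ => d.adj.ne (h₁.trans h₂.symm)
  have hsymm : {d : G.Dart // d.snd = c} ≃ {d : G.Dart // d.fst = c} :=
    Dart.symm_involutive.toPerm.subtypeEquiv fun _ => Iff.rfl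
  rw [Fintype.card_congr (subtypeOrEquiv _ _ hdisj), Fintype.card_sum,
    Fintype.card_congr hsymm, Fintype.card_subtype, dart_fst_fiber_card_eq_degree, two_mul]

end SimpleGraph

section NonBacktracking

variable {V : Type*} [DecidableEq V] (G : SimpleGraph V)

theorem nbMatrix_induce (s : Set V) :
    nbMatrix (G.induce s) = reindex (G.induceDartEquiv s) (G.induceDartEquiv s)
      ((nbMatrix G).submatrix Subtype.val Subtype.val) := by
  ext d e
  simp [nbMatrix, SimpleGraph.induceDartEquiv, Subtype.ext_iff]

theorem nbMatrix_apply_self (d : G.Dart) : nbMatrix G d d = 0 := by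
  simp [nbMatrix, d.adj.ne.symm]

theorem nbMatrix_apply_ne_zero_iff {d e : G.Dart} :
    nbMatrix G e d ≠ 0 ↔ e.fst = d.snd ∧ e.snd ≠ d.fst := by
  simp [nbMatrix, eq_comm, and_comm]

/-- Otherwise the orbit of `s` under `σ` would span a subgraph of minimum degree two
through `c`. -/
theorem exists_nbMatrix_apply_eq_zero [Finite V] {c : V}
    (hshell : ¬ ∃ H : G.Subgraph, c ∈ H.verts ∧ ∀ v ∈ H.verts, 2 ≤ (H.neighborSet v).ncard)
    (σ : Equiv.Perm G.Dart) {s : G.Dart} (hs : s.fst = c ∨ s.snd = c) (hσs : σ s ≠ s) :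
    ∃ d, σ d ≠ d ∧ nbMatrix G (σ d) d = 0 := by
  by_contra! h
  set D := {d | σ.SameCycle s d}
  have hnb : ∀ d ∈ D, (σ d).fst = d.snd ∧ (σ d).snd ≠ d.fst := fun d hd =>
    (nbMatrix_apply_ne_zero_iff G).1 (h d ((Equiv.Perm.SameCycle.apply_eq_self_iff hd).not.1 hσs))
  refine hshell ⟨SimpleGraph.Subgraph.ofDarts D, ⟨s, Equiv.Perm.SameCycle.refl σ s, hs⟩,
    fun v hv => SimpleGraph.Subgraph.two_le_ncard_neighborSet_ofDarts ?_ ?_ hnb hv⟩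
  · exact fun d hd => hd.apply_right
  · exact fun d hd => ⟨σ.symm d, hd.symm_apply_right, σ.apply_symm_apply d⟩

end NonBacktracking

open Polynomial in
theorem det_nbMatrix_removeOneShell {V : Type*} [Fintype V] [DecidableEq V]
    (G : SimpleGraph V) [DecidableRel G.Adj] (c : V)
    (hshell : ¬ ∃ H : G.Subgraph, c ∈ H.verts ∧ ∀ v ∈ H.verts, 2 ≤ (H.neighborSet v).ncard) :
    (∀ t : ℝ, (nbMatrix G - t • 1).det =
        t ^ (2 * G.degree c) * (nbMatrix (G.induce {v | v ≠ c}) - t • 1).det) ∧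
      ∀ μ : ℂ, μ ≠ 0 →
        ((nbMatrix G).charpoly.map (algebraMap ℝ ℂ)).rootMultiplicity μ =
          ((nbMatrix (G.induce {v | v ≠ c})).charpoly.map (algebraMap ℝ ℂ)).rootMultiplicity μ := by
  set s : Set V := {v | v ≠ c}
  set q := fun d : G.Dart => d.fst ∈ s ∧ d.snd ∈ s
  have hincident : ∀ d : G.Dart, ¬ q d ↔ d.fst = c ∨ d.snd = c := fun d => by
    simp [q, s, or_iff_not_and_not]
  have hcyc : ∀ σ : Equiv.Perm G.Dart, (∃ d, ¬ q d ∧ σ d ≠ d) →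
      ∃ d, σ d ≠ d ∧ nbMatrix G (σ d) d = 0 := fun σ ⟨d, hd, hσd⟩ =>
    exists_nbMatrix_apply_eq_zero G hshell σ ((hincident d).1 hd) hσd
  have hcard : Fintype.card {d // ¬ q d} = 2 * G.degree c := by
    rw [← G.card_dart_fst_or_snd_eq_two_mul_degree c,
      Fintype.card_congr (Equiv.subtypeEquivRight hincident)]
  have hcharpoly :
      (nbMatrix G).charpoly = X ^ (2 * G.degree c) * (nbMatrix (G.induce s)).charpoly := by
    rw [charpoly_eq_X_pow_mul_charpoly_submatrix _ q (nbMatrix_apply_self G) hcyc, hcard,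
      nbMatrix_induce, charpoly_reindex]
  refine ⟨fun t => ?_, fun μ hμ => ?_⟩
  · rw [det_sub_smul_one_eq_pow_mul_det_submatrix _ q (nbMatrix_apply_self G) hcyc, hcard,
      Even.neg_pow (even_two_mul _), nbMatrix_induce, det_reindex_sub_smul_one]
  · rw [hcharpoly, Polynomial.map_mul, Polynomial.map_pow, map_X,
      rootMultiplicity_X_pow_mul ((charpoly_monic _).map _).ne_zero hμ]
end

section
/- The matrix PX, indexed in rows and columns by the directed edges of G not incident to c, has entries (PX)_{k→l, i→j} = a_{cl} a_{cj} (1 − δ_{lj}), where a is the adjacency matrix of G and δ the Kronecker delta. -/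
open Matrix

/-- The edge-swap (involution) matrix `P` on vectors indexed by darts not incident to `c`:
`(Pz)_{i→j} = z_{j→i}`. -/
def swapMat {V : Type*} [DecidableEq V] (G : SimpleGraph V) (c : V) :
    Matrix (NonIncDart G c) (NonIncDart G c) ℝ := fun r s =>
  if s.val = r.val.symm then 1 else 0


lemma DF_apply {V : Type*} [Fintype V] [DecidableEq V]
    (G : SimpleGraph V) [DecidableRel G.Adj] (c : V)
    (t : NonIncDart G c) (g : IncDart G c) :
    (blockD G c * blockF G c) t g =
      (if G.Adj c t.val.toProd.1 then (1 : ℝ) else 0) *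
      ((if g.val.toProd.2 = c then (1 : ℝ) else 0) *
       (if g.val.toProd.1 = t.val.toProd.1 then (0 : ℝ) else 1)) := by
  rw [Matrix.mul_apply]
  by_cases h : G.Adj c t.val.toProd.1
  · rw [if_pos h, one_mul]
    have hf0 : ((⟨(c, t.val.toProd.1), h⟩ : G.Dart) : G.Dart).toProd.1 = c ∨
        ((⟨(c, t.val.toProd.1), h⟩ : G.Dart)).toProd.2 = c := Or.inl rfl
    rw [Finset.sum_eq_single (⟨⟨(c, t.val.toProd.1), h⟩, hf0⟩ : IncDart G c)]
    · simp only [blockD, blockF, nbMatrix]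
      rw [if_neg (Ne.symm t.prop.2)]
      simp
    · intro f _ hf
      have : blockD G c t f = 0 := by
        simp only [blockD, nbMatrix]
        by_cases h2 : f.val.toProd.2 = t.val.toProd.1
        · exfalso
          have hne : f.val.toProd.2 ≠ c := h2 ▸ t.prop.1
          have h1 : f.val.toProd.1 = c := f.prop.resolve_right hne
          apply hf
          apply Subtype.ext
          apply SimpleGraph.Dart.ext
          exact Prod.ext h1 h2
        · rw [if_neg h2, zero_mul]
      rw [this, zero_mul]
    · intro h; exact absurd (Finset.mem_univ _) h
  · rw [if_neg h, zero_mul]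
    apply Finset.sum_eq_zero
    intro f _
    have : blockD G c t f = 0 := by
      simp only [blockD, nbMatrix]
      by_cases h2 : f.val.toProd.2 = t.val.toProd.1
      · exfalso
        have hne : f.val.toProd.2 ≠ c := h2 ▸ t.prop.1
        have h1 : f.val.toProd.1 = c := f.prop.resolve_right hne
        have hadj := f.val.adj
        rw [h1, h2] at hadj
        exact h hadj
      · rw [if_neg h2, zero_mul]
    rw [this, zero_mul]

lemma blockX_apply {V : Type*} [Fintype V] [DecidableEq V]
    (G : SimpleGraph V) [DecidableRel G.Adj] (c : V)
    (t s : NonIncDart G c) :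
    blockX G c t s =
      (if G.Adj c t.val.toProd.1 then (1 : ℝ) else 0) *
      (if G.Adj c s.val.toProd.2 then (1 : ℝ) else 0) *
      (if t.val.toProd.1 = s.val.toProd.2 then (0 : ℝ) else 1) := by
  rw [blockX, Matrix.mul_apply]
  by_cases h : G.Adj c s.val.toProd.2
  · have hg0 : ((⟨(s.val.toProd.2, c), h.symm⟩ : G.Dart)).toProd.1 = c ∨
        ((⟨(s.val.toProd.2, c), h.symm⟩ : G.Dart)).toProd.2 = c := Or.inr rfl
    rw [Finset.sum_eq_single (⟨⟨(s.val.toProd.2, c), h.symm⟩, hg0⟩ : IncDart G c)]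
    · rw [DF_apply]
      simp only [blockE, nbMatrix]
      rw [if_pos h, if_neg s.prop.1]
      by_cases hts : t.val.toProd.1 = s.val.toProd.2
      · rw [if_pos hts, if_pos hts.symm]; simp
      · rw [if_neg hts, if_neg (Ne.symm hts)]; simp
    · intro g _ hg
      by_cases h2 : g.val.toProd.2 = c
      · by_cases h3 : s.val.toProd.2 = g.val.toProd.1
        · exfalso
          apply hg
          apply Subtype.ext
          apply SimpleGraph.Dart.ext
          exact Prod.ext h3.symm h2
        · have : blockE G c g s = 0 := by
            simp only [blockE, nbMatrix]
            rw [if_neg h3, zero_mul]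
          rw [this, mul_zero]
      · rw [DF_apply, if_neg h2]
        ring
    · intro h; exact absurd (Finset.mem_univ _) h
  · rw [if_neg h, mul_zero, zero_mul]
    apply Finset.sum_eq_zero
    intro g _
    by_cases h2 : g.val.toProd.2 = c
    · by_cases h3 : s.val.toProd.2 = g.val.toProd.1
      · exfalso
        have hadj := g.val.adj
        rw [h3.symm, h2] at hadj
        exact h hadj.symm
      · have : blockE G c g s = 0 := by
          simp only [blockE, nbMatrix]
          rw [if_neg h3, zero_mul]
        rw [this, mul_zero]
    · rw [DF_apply, if_neg h2]
      ring

theorem PX_entries {V : Type*} [Fintype V] [DecidableEq V]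
    (G : SimpleGraph V) [DecidableRel G.Adj] (c : V) (r s : NonIncDart G c) :
    (swapMat G c * blockX G c) r s =
      (if G.Adj c r.val.toProd.2 then (1 : ℝ) else 0) *
      (if G.Adj c s.val.toProd.2 then (1 : ℝ) else 0) *
      (if r.val.toProd.2 = s.val.toProd.2 then 0 else 1) := by
  rw [Matrix.mul_apply]
  have hmem : r.val.symm.toProd.1 ≠ c ∧ r.val.symm.toProd.2 ≠ c := ⟨r.prop.2, r.prop.1⟩
  rw [Finset.sum_eq_single (⟨r.val.symm, hmem⟩ : NonIncDart G c)]
  · have h1 : swapMat G c r ⟨r.val.symm, hmem⟩ = 1 := if_pos rfl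
    rw [h1, one_mul, blockX_apply]
    rfl
  · intro t _ ht
    have h0 : swapMat G c r t = 0 := if_neg (fun hc => ht (Subtype.ext hc))
    rw [h0, zero_mul]
  · intro h; exact absurd (Finset.mem_univ _) h
end
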